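/- Let F be a finite field with q elements, let g ∈ F be nonzero, let n ≥ 2 be a natural number, and let e be the order of g in the multiplicative group F^× = F \ {0}. Then x^n − g is irreducible over F if and only if the following three conditions hold: (1) gcd((q−1)/e, n) = 1; (2) every prime divisor of n divides e; (3) if 4 divides n, then 4 divides q − 1. -/

import Mathlib

/-!
Over any field, `X ^ n - C a` is irreducible as soon as `a` is not a `p`-th power for any prime
`p ∣ n` and `-1` is a square when `4 ∣ n`: write `n = p * m`, adjoin a root `x` of the irreducible
`X ^ p - C a`, and apply induction to `X ^ m - C x` over `K⟮x⟯`. If `x` were an `r`-th power there,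
so would be its norm `(-1) ^ (p + 1) * a`, hence `a` itself, because the sign is an `r`-th power
(trivially unless `p = r = 2`, where `4 ∣ n` makes `-1` a square).

Over a finite field the square condition is also necessary: if neither `-1` nor `a` is a square,
then `a = -4 * b ^ 4` and Sophie Germain's identity factors `X ^ (4 * m) + 4 * b ^ 4`.
Finally, in the cyclic group `Fˣ` of order `q - 1`, an element of order `e` is a `p`-th power
iff `p ∣ e → p ∣ (q - 1) / e`, and `-1` is a square iff `q % 4 ≠ 3`.
-/

open Polynomial IntermediateField

theorem norm_adjoinSimple_gen_of_minpoly_eq_X_pow_sub_C {K E : Type*} [Field K] [Field E]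
    [Algebra K E] {x : E} {n : ℕ} (hn : n ≠ 0) {a : K} (hx : minpoly K x = X ^ n - C a) :
    Algebra.norm K (AdjoinSimple.gen K x) = (-1) ^ (n + 1) * a := by
  have hint : IsIntegral K x := by
    by_contra h
    exact X_pow_sub_C_ne_zero (Nat.pos_of_ne_zero hn) a (hx ▸ minpoly.eq_zero h)
  rw [← adjoin.powerBasis_gen hint, Algebra.PowerBasis.norm_gen_eq_coeff_zero_minpoly,
    adjoin.powerBasis_gen, minpoly_gen, adjoin.powerBasis_dim, hx, natDegree_X_pow_sub_C]
  simp [hn.symm, pow_succ]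

theorem X_pow_sub_C_irreducible_of_forall_prime {K : Type*} [Field K] {n : ℕ} (hn : n ≠ 0)
    {a : K} (ha : ∀ p : ℕ, p.Prime → p ∣ n → ∀ b : K, b ^ p ≠ a)
    (h4 : 4 ∣ n → IsSquare (-1 : K)) :
    Irreducible (X ^ n - C a) := by
  induction n using induction_on_primes generalizing K a with
  | zero => exact absurd rfl hn
  | one => simpa using irreducible_X_sub_C a
  | prime_mul p m hp IH =>
    have hm : m ≠ 0 := right_ne_zero_of_mul hn
    rw [mul_comm]
    apply X_pow_mul_sub_C_irreducible
      (X_pow_sub_C_irreducible_of_prime hp (ha p hp (dvd_mul_right _ _)))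
    intro E _ _ x hx
    apply IH hm
    · intro r hr hrm b hb
      obtain ⟨s, hs⟩ : ∃ s : K, s ^ r = (-1) ^ (p + 1) := by
        rcases hp.eq_two_or_odd' with rfl | hp_odd
        · rcases hr.eq_two_or_odd' with rfl | hr_odd
          · obtain ⟨i, hi⟩ := h4 (mul_dvd_mul_left 2 hrm)
            exact ⟨i, by rw [sq, ← hi]; norm_num⟩
          · exact ⟨-1, by rw [hr_odd.neg_one_pow]; norm_num⟩
        · exact ⟨1, by rw [one_pow, (hp_odd.add_one).neg_one_pow]⟩
      apply ha r hr (dvd_mul_of_dvd_right hrm p) (s * Algebra.norm K b)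
      rw [mul_pow, ← map_pow, hb, norm_adjoinSimple_gen_of_minpoly_eq_X_pow_sub_C hp.ne_zero hx,
        hs, ← mul_assoc, ← pow_add, ← two_mul, pow_mul]
      simp
    · exact fun h ↦ by simpa using (h4 (dvd_mul_of_dvd_right h p)).map (algebraMap K K⟮x⟯)

theorem not_irreducible_X_pow_sub_C_neg_four_mul_pow_four {K : Type*} [Field K] {n : ℕ}
    (hn : n ≠ 0) (h4 : 4 ∣ n) (b : K) : ¬ Irreducible (X ^ n - C (-4 * b ^ 4)) := by
  obtain ⟨m, rfl⟩ := h4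
  have hm : m ≠ 0 := right_ne_zero_of_mul hn
  have hfactor : (X : K[X]) ^ (4 * m) - C (-4 * b ^ 4) =
      (X ^ (2 * m) + C (2 * b) * X ^ m + C (2 * b ^ 2)) *
        (X ^ (2 * m) + C (-(2 * b)) * X ^ m + C (2 * b ^ 2)) := by
    simp only [map_neg, map_mul, map_pow, map_ofNat]
    ring
  have hnot_unit (c : K) : ¬ IsUnit (X ^ (2 * m) + C c * X ^ m + C (2 * b ^ 2)) := by
    intro hu
    have hdeg : (X ^ (2 * m) + C c * X ^ m + C (2 * b ^ 2)).natDegree = 2 * m := by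
      compute_degree!
      · simp [show 2 * m ≠ m by omega, hm]
      all_goals omega
    have := natDegree_eq_zero_of_isUnit hu
    omega
  intro hirr
  rcases hirr.isUnit_or_isUnit hfactor with h | h <;> exact hnot_unit _ h

theorem Nat.gcd_eq_one_and_forall_prime_dvd_iff {m n e : ℕ} :
    (Nat.gcd m n = 1 ∧ ∀ p : ℕ, p.Prime → p ∣ n → p ∣ e) ↔
      ∀ p : ℕ, p.Prime → p ∣ n → p ∣ e ∧ ¬ p ∣ m := by
  refine ⟨fun ⟨hmn, he⟩ p hp hpn ↦ ⟨he p hp hpn, fun hpm ↦ ?_⟩,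
    fun h ↦ ⟨?_, fun p hp hpn ↦ (h p hp hpn).1⟩⟩
  · exact hp.one_lt.ne' (Nat.eq_one_of_dvd_one (hmn ▸ Nat.dvd_gcd hpm hpn))
  · exact Nat.coprime_of_dvd fun p hp hpm hpn ↦ (h p hp hpn).2 hpm

theorem IsCyclic.exists_pow_eq_iff_of_prime {G : Type*} [Group G] [IsCyclic G] [Finite G]
    {p : ℕ} (hp : p.Prime) (x : G) :
    (∃ y, y ^ p = x) ↔ (p ∣ orderOf x → p ∣ Nat.card G / orderOf x) := by
  constructor
  · rintro ⟨y, rfl⟩ hpx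
    have hord : orderOf (y ^ p) = orderOf y / (orderOf y).gcd p := orderOf_pow y
    have hpy : p ∣ orderOf y := by
      by_contra h
      rw [(Nat.coprime_comm.mp (hp.coprime_iff_not_dvd.mpr h)).gcd_eq_one, Nat.div_one] at hord
      exact h (hord ▸ hpx)
    rw [Nat.gcd_eq_right hpy] at hord
    apply Nat.dvd_div_of_mul_dvd
    rw [hord, Nat.div_mul_cancel hpy]
    exact orderOf_dvd_natCard y
  · intro h
    by_cases hpx : p ∣ orderOf x
    · obtain ⟨z, hz⟩ := IsCyclic.exists_generator (α := G)
      obtain ⟨k, rfl⟩ : ∃ k : ℕ, z ^ k = x := mem_powers_iff_mem_zpowers.mpr (hz x)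
      have hcard : Nat.card G / orderOf (z ^ k) = (Nat.card G).gcd k := by
        rw [orderOf_pow, orderOf_eq_card_of_forall_mem_zpowers hz,
          Nat.div_div_self (Nat.gcd_dvd_left _ _) Nat.card_pos.ne']
      obtain ⟨j, rfl⟩ : p ∣ k := (hcard ▸ h hpx).trans (Nat.gcd_dvd_right _ _)
      exact ⟨z ^ j, by rw [← pow_mul, mul_comm]⟩
    · obtain ⟨m, hm⟩ := exists_pow_eq_self_of_coprime (hp.coprime_iff_not_dvd.mpr hpx)
      exact ⟨x ^ m, by rw [← pow_mul, mul_comm, pow_mul, hm]⟩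

namespace FiniteField

variable {F : Type*} [Field F] [Fintype F]

theorem isSquare_mul_of_not_isSquare {a b : F} (ha : ¬ IsSquare a) (hb : ¬ IsSquare b) :
    IsSquare (a * b) := by
  classical
  have ha0 : a ≠ 0 := by rintro rfl; exact ha IsSquare.zero
  have hb0 : b ≠ 0 := by rintro rfl; exact hb IsSquare.zero
  rw [← quadraticChar_one_iff_isSquare (mul_ne_zero ha0 hb0), map_mul,
    quadraticChar_neg_one_iff_not_isSquare.mpr ha, quadraticChar_neg_one_iff_not_isSquare.mpr hb]
  norm_num

theorem isSquare_or_isSquare_neg (h : ¬ IsSquare (-1 : F)) (a : F) :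
    IsSquare a ∨ IsSquare (-a) := by
  by_cases ha : IsSquare a
  · exact .inl ha
  · exact .inr (by simpa using isSquare_mul_of_not_isSquare h ha)

theorem exists_eq_neg_four_mul_pow_four (h : ¬ IsSquare (-1 : F)) {g : F}
    (hg : ¬ IsSquare g) : ∃ b : F, g = -4 * b ^ 4 := by
  have h2 : (2 : F) ≠ 0 := Ring.two_ne_zero fun hchar ↦ h (isSquare_of_char_two hchar _)
  obtain ⟨c, hc⟩ : IsSquare (-g) := by simpa using isSquare_mul_of_not_isSquare h hg
  obtain ⟨d, rfl⟩ : ∃ d, c = 2 * d := ⟨c / 2, by field_simp⟩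
  rcases isSquare_or_isSquare_neg h d with ⟨b, hb⟩ | ⟨b, hb⟩
  · exact ⟨b, by linear_combination -hc - 4 * (d + b ^ 2) * hb⟩
  · exact ⟨b, by linear_combination -hc + 4 * (d - b ^ 2) * hb⟩

theorem forall_pow_ne_iff_of_prime {g : F} (hg : g ≠ 0) {p : ℕ} (hp : p.Prime) :
    (∀ b : F, b ^ p ≠ g) ↔
      p ∣ orderOf g ∧ ¬ p ∣ (Fintype.card F - 1) / orderOf g := by
  have hunits : (∃ b : F, b ^ p = g) ↔ ∃ v : Fˣ, v ^ p = Units.mk0 g hg := by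
    constructor
    · rintro ⟨b, rfl⟩
      exact ⟨Units.mk0 b (by rintro rfl; simp [hp.ne_zero] at hg), Units.ext (by simp)⟩
    · rintro ⟨v, hv⟩
      exact ⟨v, by simpa using congrArg Units.val hv⟩
  have hord : orderOf (Units.mk0 g hg) = orderOf g := by
    rw [← orderOf_units, Units.val_mk0]
  rw [← not_exists, hunits, IsCyclic.exists_pow_eq_iff_of_prime hp, hord, Nat.card_units,
    Nat.card_eq_fintype_card, Classical.not_imp]

theorem irreducible_X_pow_sub_C_iff {n : ℕ} (hn : n ≠ 0) {g : F} :
    Irreducible (X ^ n - C g) ↔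
      (∀ p : ℕ, p.Prime → p ∣ n → ∀ b : F, b ^ p ≠ g) ∧ (4 ∣ n → IsSquare (-1 : F)) := by
  refine ⟨fun hirr ↦ ⟨fun p hp hpn ↦ pow_ne_of_irreducible_X_pow_sub_C hirr hpn hp.ne_one,
    fun h4 ↦ ?_⟩, fun h ↦ X_pow_sub_C_irreducible_of_forall_prime hn h.1 h.2⟩
  by_contra h
  have hg : ¬ IsSquare g := by
    rintro ⟨b, rfl⟩
    exact pow_ne_of_irreducible_X_pow_sub_C hirr (dvd_trans ⟨2, rfl⟩ h4) (by norm_num) b (sq b)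
  obtain ⟨b, rfl⟩ := exists_eq_neg_four_mul_pow_four h hg
  exact not_irreducible_X_pow_sub_C_neg_four_mul_pow_four hn h4 b hirr

end FiniteField

/-- Lidl–Niederreiter, Theorem 3.75: for a finite field `F` with `q` elements,
`g ∈ F` nonzero of multiplicative order `e`, and `n ≥ 2`, the binomial
`x^n - g` is irreducible over `F` iff `gcd((q-1)/e, n) = 1`, every prime
divisor of `n` divides `e`, and `4 ∣ n → 4 ∣ q - 1`. -/
theorem binomial_irreducible_iff_finite_field {F : Type*} [Field F] [Fintype F]
    (q : ℕ) (hq : Fintype.card F = q) (g : F) (hg : g ≠ 0)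
    (n : ℕ) (hn : 2 ≤ n) (e : ℕ) (he : e = orderOf g) :
    Irreducible ((X : F[X]) ^ n - C g) ↔
      Nat.gcd ((q - 1) / e) n = 1 ∧
        (∀ p : ℕ, p.Prime → p ∣ n → p ∣ e) ∧
          (4 ∣ n → 4 ∣ q - 1) := by
  subst hq he
  have he_dvd : orderOf g ∣ Fintype.card F - 1 :=
    orderOf_dvd_of_pow_eq_one (FiniteField.pow_card_sub_one_eq_one g hg)
  rw [FiniteField.irreducible_X_pow_sub_C_iff (by omega), ← and_assoc,
    Nat.gcd_eq_one_and_forall_prime_dvd_iff]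
  have hpow : (∀ p : ℕ, p.Prime → p ∣ n → ∀ b : F, b ^ p ≠ g) ↔
      ∀ p : ℕ, p.Prime → p ∣ n →
        p ∣ orderOf g ∧ ¬ p ∣ (Fintype.card F - 1) / orderOf g :=
    forall₂_congr fun p hp ↦ imp_congr_right fun _ ↦ FiniteField.forall_pow_ne_iff_of_prime hg hp
  rw [hpow]
  refine and_congr_right fun h ↦ imp_congr_right fun h4 ↦ ?_
  have h2 : 2 ∣ Fintype.card F - 1 :=
    (h 2 Nat.prime_two (dvd_trans (by norm_num) h4)).1.trans he_dvd
  rw [FiniteField.isSquare_neg_one_iff]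
  omega
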